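/- arXiv:2603.20840 — 3 statements merged into one kernel-verified Lean document; each statement's English description precedes it below -/
import Mathlib

section
/- Fix T > 0. There exists a constant C > 0 such that |E_α(A t₁^α) − E_α(A t₂^α)| ≤ C |t₁ − t₂|^α for all t₁, t₂ ∈ [0, T]. In particular, for every positive integer n with step size h = T/n, sup_{s ∈ [0,T]} |E_α(A s^α) − E_α(A s̲^α)| ≤ C n^{−α}. -/
open MeasureTheory Filter

/-- Matrix Mittag--Leffler function `E_{a,b}(M) = ∑ M^k / Γ(a k + b)`. -/
noncomputable def mittagLeffler {d : ℕ} (a b : ℝ) (M : Matrix (Fin d) (Fin d) ℝ) :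
    Matrix (Fin d) (Fin d) ℝ :=
  ∑' k : ℕ, (Real.Gamma (a * k + b))⁻¹ • M ^ k

/-- `A` is negative definite: `xᵀ A x < 0` for all nonzero `x`. -/
def IsNegDef {d : ℕ} (A : Matrix (Fin d) (Fin d) ℝ) : Prop :=
  ∀ x : Fin d → ℝ, x ≠ 0 → dotProduct x (A.mulVec x) < 0

/-- `𝒦(u) = u^(α-1)` for `u > 0` (and `0` otherwise). -/
noncomputable def calK (α u : ℝ) : ℝ := if 0 < u then u ^ (α - 1) else 0

/-- `ℰ(u) = E_{α,α}(A u^α)`. -/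
noncomputable def calE {d : ℕ} (α : ℝ) (A : Matrix (Fin d) (Fin d) ℝ) (u : ℝ) :
    Matrix (Fin d) (Fin d) ℝ :=
  mittagLeffler α α ((u ^ α) • A)

/-- `E_α(A t^α)` where `E_α = E_{α,1}`. -/
noncomputable def mlOne {d : ℕ} (α : ℝ) (A : Matrix (Fin d) (Fin d) ℝ) (t : ℝ) :
    Matrix (Fin d) (Fin d) ℝ :=
  mittagLeffler α 1 ((t ^ α) • A)

/-- The kernel `K(u) = 𝒦(u) ℰ(u) = u^(α-1) E_{α,α}(A u^α)`. -/
noncomputable def kerK {d : ℕ} (α : ℝ) (A : Matrix (Fin d) (Fin d) ℝ) (u : ℝ) :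
    Matrix (Fin d) (Fin d) ℝ :=
  calK α u • calE α A u

/-- Left grid point `s̲ = ⌊n s⌋ / n` (step size `1/n`, `T = 1`). -/
noncomputable def lgrid (n : ℕ) (s : ℝ) : ℝ := (⌊(n : ℝ) * s⌋ : ℝ) / n

/-- Left grid point `s̲ = ⌊s/h⌋ h` with `h = T/n`. -/
noncomputable def grid (T : ℝ) (n : ℕ) (s : ℝ) : ℝ := (⌊s / (T / n)⌋ : ℝ) * (T / n)

/-- Dominating function `Ψ`. -/
noncomputable def Psi (α y : ℝ) : ℝ := if y ≤ 1 then y ^ (2 * α - 2) else y ^ (2 * α - 4)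

/-- `(𝒥_n)^{i₁,i₂}_{j₁,j₂}(s,y)`. -/
noncomputable def Jn {d : ℕ} (α : ℝ) (A : Matrix (Fin d) (Fin d) ℝ) (n : ℕ)
    (i1 j1 i2 j2 : Fin d) (s y : ℝ) : ℝ :=
  (calK α (y + (n : ℝ) * s - (⌊(n : ℝ) * s⌋ : ℝ)) *
        calE α A ((y + (n : ℝ) * s - (⌊(n : ℝ) * s⌋ : ℝ)) / n) i1 j1
      - calK α ((⌈y⌉ : ℝ)) * calE α A ((⌈y⌉ : ℝ) / n) i1 j1) *
  (calK α (y + (n : ℝ) * s - (⌊(n : ℝ) * s⌋ : ℝ)) *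
        calE α A ((y + (n : ℝ) * s - (⌊(n : ℝ) * s⌋ : ℝ)) / n) i2 j2
      - calK α ((⌈y⌉ : ℝ)) * calE α A ((⌈y⌉ : ℝ) / n) i2 j2)

/-- `(𝒢_n)^{i₁,i₂}_{j₁,j₂}(s,y)`. -/
noncomputable def Gn {d : ℕ} (α : ℝ) (n : ℕ) (i1 j1 i2 j2 : Fin d) (s y : ℝ) : ℝ :=
  if i1 = j1 ∧ i2 = j2 then
    ((Real.Gamma α) ^ 2)⁻¹ *
      (calK α (y + (n : ℝ) * s - (⌊(n : ℝ) * s⌋ : ℝ)) - calK α ((⌈y⌉ : ℝ))) ^ 2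
  else 0

/-- The constant `κ₂²(α)`. -/
noncomputable def kappa2sq (α : ℝ) : ℝ :=
  ((Real.Gamma α) ^ 2)⁻¹ *
    ∫ x in Set.Ioc (0 : ℝ) 1, ∫ y in Set.Ioi (0 : ℝ),
      (calK α ((⌈y⌉ : ℝ) - x) - calK α ((⌈y⌉ : ℝ))) ^ 2

/-- Frobenius norm of a matrix. -/
noncomputable def frobNorm {d : ℕ} (M : Matrix (Fin d) (Fin d) ℝ) : ℝ :=
  Real.sqrt (∑ i, ∑ j, (M i j) ^ 2)

/-- Euclidean norm on `ℝ^d`. -/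
noncomputable def euclNorm {d : ℕ} (x : Fin d → ℝ) : ℝ :=
  Real.sqrt (∑ i, (x i) ^ 2)

lemma myGamma_pos {α : ℝ} (hα : 0 < α) (k : ℕ) : 0 < Real.Gamma (α * k + 1) :=
  Real.Gamma_pos_of_pos (by positivity)

lemma myGamma_ge_fact {α : ℝ} (hα : 1/2 ≤ α) {k : ℕ} (hk : 2 ≤ k) :
    ((k / 2).factorial : ℝ) ≤ Real.Gamma (α * k + 1) := by
  have hm : (1 : ℕ) ≤ k / 2 := by omega
  have hcast : ((k / 2 : ℕ) : ℝ) ≤ (k : ℝ) / 2 := Nat.cast_div_le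
  have hk2 : (2 : ℝ) ≤ (k : ℝ) := by exact_mod_cast hk
  have h1 : ((k / 2 : ℕ) : ℝ) + 1 ≤ α * k + 1 := by nlinarith
  have h2 : (2 : ℝ) ≤ ((k / 2 : ℕ) : ℝ) + 1 := by
    have : (1 : ℝ) ≤ ((k / 2 : ℕ) : ℝ) := by exact_mod_cast hm
    linarith
  have := Real.Gamma_strictMonoOn_Ici.monotoneOn (Set.mem_Ici.2 h2)
    (Set.mem_Ici.2 (le_trans h2 h1)) h1
  rwa [Real.Gamma_nat_eq_factorial] at this

lemma myEventually_fact {M : ℝ} (hM : 0 ≤ M) : ∀ᶠ m in atTop, M ^ m ≤ (m.factorial : ℝ) := by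
  have h := FloorSemiring.tendsto_pow_div_factorial_atTop M
  filter_upwards [h.eventually (eventually_le_nhds (by norm_num : (0:ℝ) < 1))] with m hm
  have hf : (0 : ℝ) < m.factorial := by positivity
  have := (div_le_one hf).mp hm
  linarith

lemma mySummable_main {α : ℝ} (hα : 1/2 ≤ α) {q : ℝ} (hq : 0 ≤ q) :
    Summable (fun k : ℕ => ((k : ℝ) + 1) * q ^ k / Real.Gamma (α * k + 1)) := by
  have hα0 : 0 < α := by linarith
  set c : ℝ := 2 * q + 2 with hc
  have hc2 : (2 : ℝ) ≤ c := by linarith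
  have hc0 : (0 : ℝ) < c := by linarith
  -- geometric dominating series
  have hg : Summable (fun k : ℕ => c * ((k : ℝ) + 1) * (1/2 : ℝ) ^ k) := by
    apply Summable.congr (f := fun k : ℕ => c * (((k : ℝ) + 1) * (1/2 : ℝ) ^ k)) ?_ (fun k => by ring)
    apply Summable.mul_left
    have h1 : Summable (fun k : ℕ => (k : ℝ) ^ 1 * (1/2 : ℝ) ^ k) :=
      summable_pow_mul_geometric_of_norm_lt_one 1 (by rw [Real.norm_eq_abs, abs_of_pos] <;> norm_num)
    have h2 : Summable (fun k : ℕ => (1/2 : ℝ) ^ k) := summable_geometric_of_lt_one (by norm_num) (by norm_num)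
    have := h1.add h2
    refine this.congr fun k => by ring
  -- eventual bound
  obtain ⟨N0, hN0⟩ := eventually_atTop.mp (myEventually_fact (M := c ^ 2) (by positivity))
  have key : ∀ m : ℕ, 2 ≤ m → N0 ≤ m / 2 →
      ((m : ℝ) + 1) * q ^ m / Real.Gamma (α * m + 1) ≤ c * ((m : ℝ) + 1) * (1/2 : ℝ) ^ m := by
    intro m hm2 hfloor
    have hΓ : ((m / 2).factorial : ℝ) ≤ Real.Gamma (α * m + 1) := myGamma_ge_fact hα hm2
    have hfact : (c ^ 2) ^ (m / 2) ≤ ((m / 2).factorial : ℝ) := hN0 _ hfloor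
    have hpow : c ^ (m - 1) ≤ (c ^ 2) ^ (m / 2) := by
      rw [← pow_mul]
      exact pow_le_pow_right₀ (by linarith) (by omega)
    have hΓ' : c ^ (m - 1) ≤ Real.Gamma (α * m + 1) := le_trans hpow (le_trans hfact hΓ)
    have hcm : (0 : ℝ) < c ^ (m - 1) := by positivity
    have hΓpos := myGamma_pos hα0 m
    have hstep1 : ((m : ℝ) + 1) * q ^ m / Real.Gamma (α * m + 1)
        ≤ ((m : ℝ) + 1) * q ^ m / c ^ (m - 1) := by
      apply div_le_div_of_nonneg_left _ hcm hΓ'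
      positivity
    have hstep2 : ((m : ℝ) + 1) * q ^ m / c ^ (m - 1)
        ≤ c * (((m : ℝ)) + 1) * (1/2 : ℝ) ^ m := by
      have hq2 : q ≤ c / 2 := by rw [hc]; linarith
      have h1 : q ^ m ≤ (c / 2) ^ m := pow_le_pow_left₀ hq hq2 m
      have hmm : c ^ m = c * c ^ (m - 1) := by
        conv_lhs => rw [show m = m - 1 + 1 by omega]
        rw [pow_succ']
      have hhalf : (1/2 : ℝ) ^ m = ((2:ℝ) ^ m)⁻¹ := by rw [one_div, inv_pow]
      have hcc : (c / 2) ^ m = c * (1/2 : ℝ) ^ m * c ^ (m - 1) := by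
        rw [div_pow, hhalf, hmm]; field_simp
      rw [div_le_iff₀ hcm]
      have h1' : q ^ m ≤ c * (1/2:ℝ) ^ m * c ^ (m - 1) := h1.trans (le_of_eq hcc)
      calc ((m : ℝ) + 1) * q ^ m ≤ ((m : ℝ) + 1) * (c * (1/2:ℝ) ^ m * c ^ (m-1)) :=
            mul_le_mul_of_nonneg_left h1' (by positivity)
        _ = c * ((m : ℝ) + 1) * (1/2 : ℝ) ^ m * c ^ (m - 1) := by ring
    exact le_trans hstep1 hstep2
  set N := 2 * N0 + 2 with hN
  rw [← summable_nat_add_iff N]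
  apply Summable.of_nonneg_of_le
    (f := fun k : ℕ => c * ((((k + N : ℕ) : ℝ)) + 1) * (1/2 : ℝ) ^ (k + N))
  · intro k
    have := (myGamma_pos hα0 (k + N)).le
    positivity
  · intro k
    exact key (k + N) (by omega) (by omega)
  · exact (summable_nat_add_iff (f := fun k : ℕ => c * ((k : ℝ) + 1) * (1/2 : ℝ) ^ k) N).mpr hg

lemma myEntry_pow_le {d : ℕ} (A : Matrix (Fin d) (Fin d) ℝ) (k : ℕ) (i j : Fin d) :
    |(A ^ k) i j| ≤ ((∑ a, ∑ b, |A a b|) + 1) ^ k := by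
  set b : ℝ := (∑ a, ∑ b, |A a b|) + 1 with hb
  have hb1 : 1 ≤ b := by
    have : (0:ℝ) ≤ ∑ a, ∑ b, |A a b| := by positivity
    simp [hb]; linarith
  have hcol : ∀ jj : Fin d, (∑ l, |A l jj|) ≤ b := by
    intro jj
    have h1 : (∑ l, |A l jj|) ≤ ∑ a, ∑ b, |A a b| := by
      apply Finset.sum_le_sum
      intro l _
      exact Finset.single_le_sum (f := fun bb => |A l bb|) (fun _ _ => abs_nonneg _)
        (Finset.mem_univ jj)
    simp [hb]; linarith
  induction k generalizing i j with
  | zero =>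
    simp only [pow_zero, Matrix.one_apply]
    split <;> simp [abs_nonneg]
  | succ k ih =>
    rw [pow_succ, Matrix.mul_apply]
    calc |∑ l, (A ^ k) i l * A l j| ≤ ∑ l, |(A ^ k) i l * A l j| := Finset.abs_sum_le_sum_abs _ _
      _ ≤ ∑ l, b ^ k * |A l j| := by
          apply Finset.sum_le_sum
          intro l _
          rw [abs_mul]
          exact mul_le_mul_of_nonneg_right (ih i l) (abs_nonneg _)
      _ = b ^ k * ∑ l, |A l j| := by rw [Finset.mul_sum]
      _ ≤ b ^ k * b := mul_le_mul_of_nonneg_left (hcol j) (by positivity)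
      _ = b ^ (k + 1) := by rw [pow_succ]

lemma mySummable_entry {α : ℝ} (hα : 1/2 ≤ α) {d : ℕ} (A : Matrix (Fin d) (Fin d) ℝ)
    {r : ℝ} (hr : 0 ≤ r) (i j : Fin d) :
    Summable (fun k : ℕ => (Real.Gamma (α * k + 1))⁻¹ * (r ^ k * (A ^ k) i j)) := by
  have hα0 : 0 < α := by linarith
  set b : ℝ := (∑ a, ∑ b, |A a b|) + 1 with hb
  have hb0 : 0 ≤ b := by positivity
  rw [← summable_abs_iff]
  apply Summable.of_nonneg_of_le (f := fun k : ℕ => ((k:ℝ) + 1) * (r * b) ^ k / Real.Gamma (α * k + 1))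
    (fun k => abs_nonneg _)
  · intro k
    have hΓ := myGamma_pos hα0 k
    rw [abs_mul, abs_mul, abs_of_pos (inv_pos.2 hΓ), abs_pow, abs_of_nonneg hr]
    calc (Real.Gamma (α * k + 1))⁻¹ * (r ^ k * |(A ^ k) i j|)
        ≤ (Real.Gamma (α * k + 1))⁻¹ * (r ^ k * b ^ k) := by
          apply mul_le_mul_of_nonneg_left _ (inv_pos.2 hΓ).le
          exact mul_le_mul_of_nonneg_left (myEntry_pow_le A k i j) (by positivity)
      _ = 1 * (r * b) ^ k / Real.Gamma (α * k + 1) := by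
          rw [mul_pow]; field_simp
      _ ≤ ((k:ℝ) + 1) * (r * b) ^ k / Real.Gamma (α * k + 1) := by
          gcongr
          linarith [Nat.cast_nonneg (α := ℝ) k]
  · exact mySummable_main hα (by positivity)

lemma mySummable_matrix {α : ℝ} (hα : 1/2 ≤ α) {d : ℕ} (A : Matrix (Fin d) (Fin d) ℝ)
    {t : ℝ} (ht : 0 ≤ t) :
    Summable (fun k : ℕ => (Real.Gamma (α * k + 1))⁻¹ • ((t ^ α) • A) ^ k) := by
  apply Pi.summable.mpr; intro i; apply Pi.summable.mpr; intro j
  apply Summable.congr (mySummable_entry hα A (Real.rpow_nonneg ht α) i j)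
  intro k
  rw [smul_pow]
  simp [Matrix.smul_apply, smul_eq_mul]

lemma myMlOne_apply {α : ℝ} (hα : 1/2 ≤ α) {d : ℕ} (A : Matrix (Fin d) (Fin d) ℝ)
    {t : ℝ} (ht : 0 ≤ t) (i j : Fin d) :
    mlOne α A t i j = ∑' k : ℕ, (Real.Gamma (α * k + 1))⁻¹ * ((t ^ α) ^ k * (A ^ k) i j) := by
  have hs := mySummable_matrix hα A ht (t := t)
  unfold mlOne mittagLeffler
  refine (congrFun (tsum_apply hs) j).trans ?_
  refine (tsum_apply (Pi.summable.mp hs i)).trans ?_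
  congr 1
  ext k
  rw [smul_pow]
  simp [Matrix.smul_apply, smul_eq_mul]

lemma myPow_sub_pow {a b c : ℝ} (ha : 0 ≤ a) (hac : a ≤ c) (hb : 0 ≤ b) (hbc : b ≤ c)
    (k : ℕ) : |a ^ k - b ^ k| ≤ (k : ℝ) * c ^ (k - 1) * |a - b| := by
  have hc : 0 ≤ c := le_trans ha hac
  induction k with
  | zero => simp
  | succ k ih =>
    have hid : a ^ (k+1) - b ^ (k+1) = a ^ k * (a - b) + b * (a ^ k - b ^ k) := by ring
    have h1 : |a ^ k * (a - b)| ≤ c ^ k * |a - b| := by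
      rw [abs_mul, abs_pow, abs_of_nonneg ha]
      exact mul_le_mul_of_nonneg_right (pow_le_pow_left₀ ha hac k) (abs_nonneg _)
    have h2 : |b * (a ^ k - b ^ k)| ≤ (k : ℝ) * c ^ k * |a - b| := by
      rw [abs_mul, abs_of_nonneg hb]
      calc b * |a ^ k - b ^ k| ≤ c * ((k : ℝ) * c ^ (k - 1) * |a - b|) :=
            mul_le_mul hbc ih (abs_nonneg _) hc
        _ ≤ (k : ℝ) * c ^ k * |a - b| := by
            rcases Nat.eq_zero_or_pos k with hk | hk
            · subst hk; simp
            · have hcc : c * c ^ (k - 1) = c ^ k := by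
                rw [← pow_succ']; congr 1; omega
              refine le_of_eq ?_
              rw [← hcc]; ring
    calc |a ^ (k+1) - b ^ (k+1)| ≤ |a ^ k * (a - b)| + |b * (a ^ k - b ^ k)| := by
          rw [hid]; exact abs_add_le _ _
      _ ≤ c ^ k * |a - b| + (k : ℝ) * c ^ k * |a - b| := add_le_add h1 h2
      _ = ((k : ℝ) + 1) * c ^ k * |a - b| := by ring
      _ = ((k + 1 : ℕ) : ℝ) * c ^ ((k + 1) - 1) * |a - b| := by push_cast; simp

lemma myRpow_sub_le {α : ℝ} (hα0 : 0 ≤ α) (hα1 : α ≤ 1) {x y : ℝ} (hy : 0 ≤ y) (hxy : y ≤ x) :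
    x ^ α - y ^ α ≤ (x - y) ^ α := by
  have hx : 0 ≤ x := le_trans hy hxy
  have key := NNReal.rpow_add_le_add_rpow ((x - y).toNNReal) (y.toNNReal) hα0 hα1
  have hsum : (x - y).toNNReal + y.toNNReal = x.toNNReal := by
    ext
    simp [Real.coe_toNNReal, sub_nonneg.2 hxy, hy, hx]
  rw [hsum] at key
  have := (NNReal.coe_le_coe).2 key
  push_cast [NNReal.coe_rpow] at this
  rw [Real.coe_toNNReal _ hx, Real.coe_toNNReal _ (sub_nonneg.2 hxy),
    Real.coe_toNNReal _ hy] at this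
  linarith

lemma myRpow_holder {α : ℝ} (hα0 : 0 ≤ α) (hα1 : α ≤ 1) {x y : ℝ} (hx : 0 ≤ x) (hy : 0 ≤ y) :
    |x ^ α - y ^ α| ≤ |x - y| ^ α := by
  rcases le_total y x with h | h
  · rw [abs_of_nonneg (sub_nonneg.2 (Real.rpow_le_rpow hy h hα0)),
      abs_of_nonneg (sub_nonneg.2 h)]
    exact myRpow_sub_le hα0 hα1 hy h
  · rw [abs_sub_comm, abs_sub_comm x y,
      abs_of_nonneg (sub_nonneg.2 (Real.rpow_le_rpow hx h hα0)),
      abs_of_nonneg (sub_nonneg.2 h)]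
    exact myRpow_sub_le hα0 hα1 hx h

set_option maxHeartbeats 1000000 in
lemma myHolder {α : ℝ} (hα : 1/2 ≤ α) (hα1 : α ≤ 1) {d : ℕ} (A : Matrix (Fin d) (Fin d) ℝ)
    {T : ℝ} (hT : 0 < T) :
    ∃ C : ℝ, 0 ≤ C ∧ ∀ t1 t2 : ℝ, t1 ∈ Set.Icc 0 T → t2 ∈ Set.Icc 0 T → ∀ i j : Fin d,
      |mlOne α A t1 i j - mlOne α A t2 i j| ≤ C * |t1 - t2| ^ α := by
  have hα0 : (0:ℝ) < α := by linarith
  set b : ℝ := (∑ a, ∑ b, |A a b|) + 1 with hb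
  have hb0 : (0:ℝ) ≤ b := by positivity
  set R : ℝ := T ^ α with hR
  have hR0 : 0 < R := Real.rpow_pos_of_pos hT α
  have hsum0 : Summable (fun k : ℕ => ((k:ℝ) + 1) * (R * b) ^ k / Real.Gamma (α * k + 1)) :=
    mySummable_main hα (by positivity)
  set C0 : ℝ := ∑' k : ℕ, ((k:ℝ) + 1) * (R * b) ^ k / Real.Gamma (α * k + 1) with hC0
  have hC0n : 0 ≤ C0 := tsum_nonneg fun k => by
    have := (myGamma_pos hα0 k).le
    positivity
  refine ⟨R⁻¹ * C0, by positivity, ?_⟩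
  intro t1 t2 ht1 ht2 i j
  obtain ⟨ht10, ht1T⟩ := ht1
  obtain ⟨ht20, ht2T⟩ := ht2
  set r1 : ℝ := t1 ^ α with hr1
  set r2 : ℝ := t2 ^ α with hr2
  have hr10 : 0 ≤ r1 := Real.rpow_nonneg ht10 α
  have hr20 : 0 ≤ r2 := Real.rpow_nonneg ht20 α
  have hr1R : r1 ≤ R := Real.rpow_le_rpow ht10 ht1T hα0.le
  have hr2R : r2 ≤ R := Real.rpow_le_rpow ht20 ht2T hα0.le
  have S1 := mySummable_entry hα A hr10 i j
  have S2 := mySummable_entry hα A hr20 i j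
  set Δ : ℝ := |t1 - t2| ^ α with hΔ
  have hΔ0 : 0 ≤ Δ := Real.rpow_nonneg (abs_nonneg _) α
  have hrr : |r1 - r2| ≤ Δ := myRpow_holder hα0.le hα1 ht10 ht20
  -- termwise bound
  have hterm : ∀ k : ℕ,
      |(Real.Gamma (α * k + 1))⁻¹ * (r1 ^ k * (A ^ k) i j)
        - (Real.Gamma (α * k + 1))⁻¹ * (r2 ^ k * (A ^ k) i j)|
      ≤ R⁻¹ * (((k:ℝ) + 1) * (R * b) ^ k / Real.Gamma (α * k + 1)) * Δ := by
    intro k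
    have hΓ := myGamma_pos hα0 k
    have heq : (Real.Gamma (α * k + 1))⁻¹ * (r1 ^ k * (A ^ k) i j)
        - (Real.Gamma (α * k + 1))⁻¹ * (r2 ^ k * (A ^ k) i j)
        = (Real.Gamma (α * k + 1))⁻¹ * ((r1 ^ k - r2 ^ k) * (A ^ k) i j) := by ring
    rw [heq, abs_mul, abs_mul, abs_of_pos (inv_pos.2 hΓ)]
    have h1 : |r1 ^ k - r2 ^ k| ≤ (k:ℝ) * R ^ (k - 1) * Δ :=
      le_trans (myPow_sub_pow hr10 hr1R hr20 hr2R k)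
        (mul_le_mul_of_nonneg_left hrr (by positivity))
    have h2 : |(A ^ k) i j| ≤ b ^ k := myEntry_pow_le A k i j
    calc (Real.Gamma (α * k + 1))⁻¹ * (|r1 ^ k - r2 ^ k| * |(A ^ k) i j|)
        ≤ (Real.Gamma (α * k + 1))⁻¹ * (((k:ℝ) * R ^ (k - 1) * Δ) * b ^ k) := by
          apply mul_le_mul_of_nonneg_left _ (inv_pos.2 hΓ).le
          exact mul_le_mul h1 h2 (abs_nonneg _) (by positivity)
      _ ≤ R⁻¹ * (((k:ℝ) + 1) * (R * b) ^ k / Real.Gamma (α * k + 1)) * Δ := by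
          have hkey : (k:ℝ) * R ^ (k - 1) * b ^ k ≤ R⁻¹ * (((k:ℝ) + 1) * (R * b) ^ k) := by
            rcases Nat.eq_zero_or_pos k with hk | hk
            · subst hk; simp; positivity
            · have hRk : R ^ (k - 1) = R⁻¹ * R ^ k := by
                rw [eq_inv_mul_iff_mul_eq₀ hR0.ne', ← pow_succ']
                congr 1; omega
              rw [hRk, mul_pow]
              have : (k:ℝ) ≤ (k:ℝ) + 1 := by linarith
              calc (k:ℝ) * (R⁻¹ * R ^ k) * b ^ k
                  = R⁻¹ * ((k:ℝ) * (R ^ k * b ^ k)) := by ring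
                _ ≤ R⁻¹ * (((k:ℝ) + 1) * (R ^ k * b ^ k)) := by
                    apply mul_le_mul_of_nonneg_left _ (inv_pos.2 hR0).le
                    apply mul_le_mul_of_nonneg_right this (by positivity)
                _ = R⁻¹ * (((k:ℝ) + 1) * (R ^ k * b ^ k)) := rfl
          calc (Real.Gamma (α * k + 1))⁻¹ * (((k:ℝ) * R ^ (k - 1) * Δ) * b ^ k)
              = ((k:ℝ) * R ^ (k - 1) * b ^ k) * (Real.Gamma (α * k + 1))⁻¹ * Δ := by ring
            _ ≤ (R⁻¹ * (((k:ℝ) + 1) * (R * b) ^ k)) * (Real.Gamma (α * k + 1))⁻¹ * Δ := by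
                apply mul_le_mul_of_nonneg_right _ hΔ0
                exact mul_le_mul_of_nonneg_right hkey (inv_pos.2 hΓ).le
            _ = R⁻¹ * (((k:ℝ) + 1) * (R * b) ^ k / Real.Gamma (α * k + 1)) * Δ := by
                rw [div_eq_mul_inv]; ring
  -- assemble
  rw [myMlOne_apply hα A ht10 i j, myMlOne_apply hα A ht20 i j, ← Summable.tsum_sub S1 S2]
  have hsub := S1.sub S2
  have habs : Summable (fun k : ℕ => |(Real.Gamma (α * k + 1))⁻¹ * (r1 ^ k * (A ^ k) i j)
      - (Real.Gamma (α * k + 1))⁻¹ * (r2 ^ k * (A ^ k) i j)|) := hsub.abs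
  calc |∑' k : ℕ, ((Real.Gamma (α * k + 1))⁻¹ * (r1 ^ k * (A ^ k) i j)
          - (Real.Gamma (α * k + 1))⁻¹ * (r2 ^ k * (A ^ k) i j))|
      ≤ ∑' k : ℕ, |(Real.Gamma (α * k + 1))⁻¹ * (r1 ^ k * (A ^ k) i j)
          - (Real.Gamma (α * k + 1))⁻¹ * (r2 ^ k * (A ^ k) i j)| := by
        have h := norm_tsum_le_tsum_norm (f := fun k : ℕ =>
          (Real.Gamma (α * k + 1))⁻¹ * (r1 ^ k * (A ^ k) i j)
            - (Real.Gamma (α * k + 1))⁻¹ * (r2 ^ k * (A ^ k) i j))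
          (by simpa [Real.norm_eq_abs] using habs)
        simpa [Real.norm_eq_abs] using h
    _ ≤ ∑' k : ℕ, R⁻¹ * (((k:ℝ) + 1) * (R * b) ^ k / Real.Gamma (α * k + 1)) * Δ :=
        Summable.tsum_le_tsum hterm habs (((hsum0.mul_left R⁻¹).mul_right Δ).congr fun k => by ring)
    _ = R⁻¹ * C0 * Δ := by
        rw [hC0, ← tsum_mul_left (a := R⁻¹), ← tsum_mul_right]


lemma myFrob_le {d : ℕ} (M : Matrix (Fin d) (Fin d) ℝ) :
    frobNorm M ≤ ∑ i, ∑ j, |M i j| := by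
  set S : ℝ := ∑ i, ∑ j, |M i j| with hS
  have hS0 : 0 ≤ S := by positivity
  have hij : ∀ i j : Fin d, |M i j| ≤ S := by
    intro i j
    calc |M i j| ≤ ∑ jj, |M i jj| :=
          Finset.single_le_sum (f := fun jj => |M i jj|) (fun _ _ => abs_nonneg _)
            (Finset.mem_univ j)
      _ ≤ S := Finset.single_le_sum (f := fun ii => ∑ jj, |M ii jj|)
            (fun _ _ => by positivity) (Finset.mem_univ i)
  have hsum : (∑ i, ∑ j, (M i j) ^ 2) ≤ S ^ 2 := by
    calc (∑ i, ∑ j, (M i j) ^ 2) ≤ ∑ i, ∑ j, |M i j| * S := by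
          apply Finset.sum_le_sum; intro i _
          apply Finset.sum_le_sum; intro j _
          rw [← sq_abs, sq]
          exact mul_le_mul_of_nonneg_left (hij i j) (abs_nonneg _)
      _ = S * S := by
          rw [hS, Finset.sum_mul]
          congr 1; ext i
          rw [Finset.sum_mul]
      _ = S ^ 2 := by ring
  calc frobNorm M ≤ Real.sqrt (S ^ 2) := Real.sqrt_le_sqrt hsum
    _ = S := Real.sqrt_sq hS0


theorem stmt13 (α : ℝ) (hα1 : 1 / 2 < α) (hα2 : α < 1) (d : ℕ) (hd : 1 ≤ d)
    (A : Matrix (Fin d) (Fin d) ℝ) (hA : IsNegDef A) (T : ℝ) (hT : 0 < T) :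
    ∃ C : ℝ, 0 < C ∧
      (∀ t1 t2 : ℝ, t1 ∈ Set.Icc 0 T → t2 ∈ Set.Icc 0 T →
        frobNorm (mlOne α A t1 - mlOne α A t2) ≤ C * |t1 - t2| ^ α) ∧
      ∀ n : ℕ, 1 ≤ n → ∀ s : ℝ, s ∈ Set.Icc 0 T →
        frobNorm (mlOne α A s - mlOne α A (grid T n s)) ≤ C * (n : ℝ) ^ (-α) := by
  have hα0 : (0:ℝ) < α := by linarith
  obtain ⟨C0, hC00, hC0⟩ := myHolder (le_of_lt hα1) (le_of_lt hα2) A hT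
  set R : ℝ := T ^ α with hR
  have hR0 : 0 < R := Real.rpow_pos_of_pos hT α
  have hfr : ∀ t1 t2 : ℝ, t1 ∈ Set.Icc 0 T → t2 ∈ Set.Icc 0 T →
      frobNorm (mlOne α A t1 - mlOne α A t2) ≤ (d:ℝ)^2 * C0 * |t1 - t2| ^ α := by
    intro t1 t2 h1 h2
    have hΔ0 : (0:ℝ) ≤ |t1 - t2| ^ α := Real.rpow_nonneg (abs_nonneg _) α
    calc frobNorm (mlOne α A t1 - mlOne α A t2)
        ≤ ∑ i, ∑ j, |(mlOne α A t1 - mlOne α A t2) i j| := myFrob_le _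
      _ ≤ ∑ _i : Fin d, ∑ _j : Fin d, C0 * |t1 - t2| ^ α := by
          apply Finset.sum_le_sum; intro i _
          apply Finset.sum_le_sum; intro j _
          rw [Matrix.sub_apply]
          exact hC0 t1 t2 h1 h2 i j
      _ = (d:ℝ)^2 * C0 * |t1 - t2| ^ α := by
          simp [Finset.sum_const, Finset.card_univ]
          ring
  refine ⟨((d:ℝ)^2 * C0 + 1) * (1 + R), by positivity, ?_, ?_⟩
  · intro t1 t2 h1 h2
    refine (hfr t1 t2 h1 h2).trans ?_
    have hΔ0 : (0:ℝ) ≤ |t1 - t2| ^ α := Real.rpow_nonneg (abs_nonneg _) α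
    apply mul_le_mul_of_nonneg_right _ hΔ0
    nlinarith [mul_nonneg (mul_nonneg (sq_nonneg (d:ℝ)) hC00) hR0.le, hR0.le,
      mul_nonneg (sq_nonneg (d:ℝ)) hC00]
  · intro n hn s hs
    have hn0 : (0:ℝ) < (n:ℝ) := by exact_mod_cast hn
    have hh0 : (0:ℝ) < T / n := div_pos hT hn0
    set g : ℝ := grid T n s with hg
    have hfl0 : (0:ℤ) ≤ ⌊s / (T / n)⌋ := Int.floor_nonneg.2 (div_nonneg hs.1 hh0.le)
    have hg0 : 0 ≤ g := by
      rw [hg]; unfold grid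
      have : (0:ℝ) ≤ (⌊s / (T / n)⌋ : ℝ) := by exact_mod_cast hfl0
      positivity
    have hgle : g ≤ s := by
      rw [hg]; unfold grid
      calc (⌊s / (T / n)⌋ : ℝ) * (T / n) ≤ (s / (T / n)) * (T / n) :=
            mul_le_mul_of_nonneg_right (Int.floor_le _) hh0.le
        _ = s := div_mul_cancel₀ _ hh0.ne'
    have hsg : s - g ≤ T / n := by
      have h1 : s / (T / n) < (⌊s / (T / n)⌋ : ℝ) + 1 := Int.lt_floor_add_one _
      have h2 : s < ((⌊s / (T / n)⌋ : ℝ) + 1) * (T / n) := by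
        have := mul_lt_mul_of_pos_right h1 hh0
        rwa [div_mul_cancel₀ _ hh0.ne'] at this
      rw [hg]; unfold grid
      nlinarith
    have hgIcc : g ∈ Set.Icc (0:ℝ) T := ⟨hg0, hgle.trans hs.2⟩
    have habs : |s - g| ≤ T / n := by
      rw [abs_of_nonneg (sub_nonneg.2 hgle)]; exact hsg
    have hpow : |s - g| ^ α ≤ (T / n) ^ α :=
      Real.rpow_le_rpow (abs_nonneg _) habs hα0.le
    have hTn : (T / n) ^ α = R * (n:ℝ) ^ (-α) := by
      rw [Real.div_rpow hT.le hn0.le, Real.rpow_neg hn0.le, div_eq_mul_inv, hR]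
    calc frobNorm (mlOne α A s - mlOne α A g)
        ≤ (d:ℝ)^2 * C0 * |s - g| ^ α := hfr s g hs hgIcc
      _ ≤ (d:ℝ)^2 * C0 * (R * (n:ℝ) ^ (-α)) := by
          rw [← hTn]
          exact mul_le_mul_of_nonneg_left hpow (by positivity)
      _ ≤ ((d:ℝ)^2 * C0 + 1) * (1 + R) * (n:ℝ) ^ (-α) := by
          have hnn : (0:ℝ) ≤ (n:ℝ) ^ (-α) := Real.rpow_nonneg hn0.le _
          have hkey : (d:ℝ)^2 * C0 * R ≤ ((d:ℝ)^2 * C0 + 1) * (1 + R) := by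
            nlinarith [mul_nonneg (sq_nonneg (d:ℝ)) hC00, hR0.le]
          calc (d:ℝ)^2 * C0 * (R * (n:ℝ) ^ (-α))
              = ((d:ℝ)^2 * C0 * R) * (n:ℝ) ^ (-α) := by ring
            _ ≤ ((d:ℝ)^2 * C0 + 1) * (1 + R) * (n:ℝ) ^ (-α) :=
                mul_le_mul_of_nonneg_right hkey hnn
end

section
/- Fix T > 0. There exists a constant C > 0, depending only on α, d, A and T, such that for all t ∈ [0, T] and all h ∈ (0, T]: ∫_t^{t+h} |K(s)| ds ≤ C h^α and ∫_t^{t+h} |K(s)|² ds ≤ C h^{2α−1}. -/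
open MeasureTheory Filter

section Stmt14Aux

lemma gammaMono14 {x y : ℝ} (hx : 2 ≤ x) (hxy : x ≤ y) : Real.Gamma x ≤ Real.Gamma y :=
  Real.Gamma_strictMonoOn_Ici.monotoneOn hx (hx.trans hxy) hxy

lemma summable_half14 {g : ℕ → ℝ} (hg : ∀ n, 0 ≤ g n) (h : ∀ n, g (n + 1) ≤ (1/2) * g n) :
    Summable g := by
  refine summable_of_ratio_norm_eventually_le (r := 1/2) (by norm_num) ?_
  refine Eventually.of_forall fun n => ?_
  rw [Real.norm_eq_abs, Real.norm_eq_abs, abs_of_nonneg (hg _), abs_of_nonneg (hg _)]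
  exact h n

lemma summable_master14 {α : ℝ} (hα1 : 1/2 < α) (hα2 : α < 1) (r : ℝ) (hr : 0 ≤ r) :
    Summable (fun k : ℕ => r ^ k * (Real.Gamma (α * k + α))⁻¹) := by
  have hα0 : (0:ℝ) < α := by linarith
  set f : ℕ → ℝ := fun k => r ^ k * (Real.Gamma (α * k + α))⁻¹ with hf
  have hfpos : ∀ k, 0 ≤ f k := by
    intro k
    have : 0 < Real.Gamma (α * k + α) := Real.Gamma_pos_of_pos (by positivity)
    exact mul_nonneg (pow_nonneg hr _) (inv_nonneg.mpr this.le)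
  obtain ⟨K, hK⟩ := exists_nat_ge ((max 2 (2 * r ^ 2)) / α)
  have hKb : max 2 (2 * r ^ 2) ≤ α * K + α := by
    have := (div_le_iff₀ hα0).mp hK
    nlinarith [le_max_left (2:ℝ) (2*r^2), le_max_right (2:ℝ) (2*r^2)]
  have key : ∀ k : ℕ, K ≤ k → f (k + 2) ≤ (1/2) * f k := by
    intro k hk
    set x : ℝ := α * k + α with hx
    have hxK : α * K + α ≤ x := by
      have : (K:ℝ) ≤ k := Nat.cast_le.mpr hk
      nlinarith
    have hx2 : 2 ≤ x := le_trans (le_trans (le_max_left _ _) hKb) hxK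
    have hxr : 2 * r ^ 2 ≤ x := le_trans (le_trans (le_max_right _ _) hKb) hxK
    have hx0 : 0 < x := by linarith
    have hΓx : 0 < Real.Gamma x := Real.Gamma_pos_of_pos hx0
    have hexp : α * (↑(k + 2) : ℝ) + α = x + 2 * α := by push_cast; ring
    have h1 : Real.Gamma (x + 1) ≤ Real.Gamma (x + 2 * α) :=
      gammaMono14 (by linarith) (by linarith)
    have h2 : Real.Gamma (x + 1) = x * Real.Gamma x := Real.Gamma_add_one (ne_of_gt hx0)
    have hΓbig : x * Real.Gamma x ≤ Real.Gamma (x + 2 * α) := h2 ▸ h1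
    have hΓbig0 : 0 < Real.Gamma (x + 2 * α) := Real.Gamma_pos_of_pos (by linarith)
    have hinv : (Real.Gamma (x + 2 * α))⁻¹ ≤ (x * Real.Gamma x)⁻¹ :=
      inv_anti₀ (by positivity) hΓbig
    calc f (k + 2) = r ^ 2 * r ^ k * (Real.Gamma (x + 2 * α))⁻¹ := by
          rw [hf]; simp only [hexp]; ring
      _ ≤ r ^ 2 * r ^ k * (x * Real.Gamma x)⁻¹ := by
          apply mul_le_mul_of_nonneg_left hinv (by positivity)
      _ = (r ^ 2 / x) * (r ^ k * (Real.Gamma x)⁻¹) := by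
          rw [mul_inv]; ring
      _ ≤ (1/2) * (r ^ k * (Real.Gamma x)⁻¹) := by
          apply mul_le_mul_of_nonneg_right _ (by positivity)
          rw [div_le_iff₀ hx0]; nlinarith
      _ = (1/2) * f k := rfl
  rw [← summable_nat_add_iff K]
  apply Summable.even_add_odd
  · apply summable_half14 (fun n => hfpos _)
    intro n
    have : 2 * (n + 1) + K = (2 * n + K) + 2 := by ring
    rw [this]
    exact key _ (by omega)
  · apply summable_half14 (fun n => hfpos _)
    intro n
    have : 2 * (n + 1) + 1 + K = (2 * n + 1 + K) + 2 := by ring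
    rw [this]
    exact key _ (by omega)

lemma pow_entry_bound14 {d : ℕ} (A : Matrix (Fin d) (Fin d) ℝ) (k : ℕ) (i j : Fin d) :
    |(A ^ k) i j| ≤ (∑ a, ∑ b, |A a b|) ^ k := by
  induction k generalizing i j with
  | zero =>
    simp only [pow_zero, Matrix.one_apply]
    split <;> simp
  | succ k ih =>
    have hm0 : 0 ≤ ∑ a, ∑ b, |A a b| :=
      Finset.sum_nonneg fun a _ => Finset.sum_nonneg fun b _ => abs_nonneg _
    rw [pow_succ, Matrix.mul_apply]
    calc |∑ l, (A ^ k) i l * A l j| ≤ ∑ l, |(A ^ k) i l * A l j| :=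
          Finset.abs_sum_le_sum_abs _ _
      _ ≤ ∑ l, (∑ a, ∑ b, |A a b|) ^ k * |A l j| := by
          refine Finset.sum_le_sum fun l _ => ?_
          rw [abs_mul]
          exact mul_le_mul_of_nonneg_right (ih i l) (abs_nonneg _)
      _ = (∑ a, ∑ b, |A a b|) ^ k * ∑ l, |A l j| := by rw [← Finset.mul_sum]
      _ ≤ (∑ a, ∑ b, |A a b|) ^ k * ∑ a, ∑ b, |A a b| := by
          refine mul_le_mul_of_nonneg_left ?_ (pow_nonneg hm0 _)
          refine Finset.sum_le_sum fun a _ => ?_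
          exact Finset.single_le_sum (f := fun b => |A a b|) (fun b _ => abs_nonneg _)
            (Finset.mem_univ j)
      _ = (∑ a, ∑ b, |A a b|) ^ (k + 1) := by rw [pow_succ]

lemma frobNorm_nonneg14 {d : ℕ} (M : Matrix (Fin d) (Fin d) ℝ) : 0 ≤ frobNorm M :=
  Real.sqrt_nonneg _

lemma frobNorm_le14 {d : ℕ} (M : Matrix (Fin d) (Fin d) ℝ) (B : ℝ) (hB : 0 ≤ B)
    (h : ∀ i j, |M i j| ≤ B) : frobNorm M ≤ d * B := by
  have hsum : (∑ i, ∑ j, (M i j) ^ 2) ≤ ((d : ℝ) * B) ^ 2 := by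
    calc (∑ i, ∑ j, (M i j) ^ 2) ≤ ∑ _i : Fin d, ∑ _j : Fin d, B ^ 2 := by
          refine Finset.sum_le_sum fun i _ => Finset.sum_le_sum fun j _ => ?_
          rw [← sq_abs]
          exact pow_le_pow_left₀ (abs_nonneg _) (h i j) 2
      _ = (d : ℝ) * ((d : ℝ) * B ^ 2) := by
          simp [Finset.sum_const, Finset.card_univ, mul_comm]
      _ ≤ ((d : ℝ) * B) ^ 2 := by nlinarith [Nat.cast_nonneg (α := ℝ) d]
  calc frobNorm M ≤ Real.sqrt (((d : ℝ) * B) ^ 2) := Real.sqrt_le_sqrt hsum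
    _ = (d : ℝ) * B := Real.sqrt_sq (by positivity)

lemma frobNorm_smul14 {d : ℕ} (c : ℝ) (M : Matrix (Fin d) (Fin d) ℝ) :
    frobNorm (c • M) = |c| * frobNorm M := by
  simp only [frobNorm, Matrix.smul_apply, smul_eq_mul, mul_pow, ← Finset.mul_sum]
  rw [Real.sqrt_mul (sq_nonneg c), Real.sqrt_sq_eq_abs]

lemma calE_entry_bound14 {d : ℕ} {α : ℝ} (hα1 : 1/2 < α) (hα2 : α < 1)
    (A : Matrix (Fin d) (Fin d) ℝ) {u R : ℝ} (hu : 0 < u) (huR : u ≤ R) (i j : Fin d) :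
    |calE α A u i j| ≤
      ∑' k : ℕ, (R ^ α * (∑ a, ∑ b, |A a b|)) ^ k * (Real.Gamma (α * k + α))⁻¹ := by
  have hα0 : (0:ℝ) < α := by linarith
  set m : ℝ := ∑ a, ∑ b, |A a b| with hm
  have hm0 : 0 ≤ m := Finset.sum_nonneg fun a _ => Finset.sum_nonneg fun b _ => abs_nonneg _
  set r : ℝ := R ^ α * m with hr
  have hr0 : 0 ≤ r := mul_nonneg (Real.rpow_nonneg (hu.le.trans huR) _) hm0
  have hmaster := summable_master14 hα1 hα2 r hr0
  set e : ℕ → Matrix (Fin d) (Fin d) ℝ :=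
    fun k => (Real.Gamma (α * k + α))⁻¹ • ((u ^ α) • A) ^ k with he
  have hbound : ∀ (a b : Fin d) (k : ℕ), |e k a b| ≤ r ^ k * (Real.Gamma (α * k + α))⁻¹ := by
    intro a b k
    have hΓ : 0 < Real.Gamma (α * k + α) := Real.Gamma_pos_of_pos (by positivity)
    have hentry : e k a b = (Real.Gamma (α * k + α))⁻¹ * ((u ^ α) ^ k * (A ^ k) a b) := by
      rw [he]
      simp [smul_pow, Matrix.smul_apply, smul_eq_mul, mul_assoc]
    rw [hentry, abs_mul, abs_mul, abs_of_nonneg (inv_nonneg.mpr hΓ.le),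
      abs_of_nonneg (pow_nonneg (Real.rpow_nonneg hu.le _) _)]
    rw [mul_comm]
    apply mul_le_mul_of_nonneg_right _ (inv_nonneg.mpr hΓ.le)
    calc (u ^ α) ^ k * |(A ^ k) a b| ≤ (u ^ α) ^ k * m ^ k := by
          exact mul_le_mul_of_nonneg_left (pow_entry_bound14 A k a b)
            (pow_nonneg (Real.rpow_nonneg hu.le _) _)
      _ ≤ (R ^ α) ^ k * m ^ k := by
          apply mul_le_mul_of_nonneg_right _ (pow_nonneg hm0 _)
          exact pow_le_pow_left₀ (Real.rpow_nonneg hu.le _)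
            (Real.rpow_le_rpow hu.le huR hα0.le) _
      _ = r ^ k := by rw [hr, mul_pow]
  have hsum_entry : ∀ (a b : Fin d), Summable fun k => e k a b := by
    intro a b
    exact Summable.of_norm_bounded hmaster fun k => by
      rw [Real.norm_eq_abs]; exact hbound a b k
  have hsum_abs : Summable fun k => |e k i j| :=
    Summable.of_nonneg_of_le (fun k => abs_nonneg _) (hbound i j) hmaster
  have hSmat : Summable e := Pi.summable.mpr fun a => Pi.summable.mpr fun b => hsum_entry a b
  have happ : calE α A u i j = ∑' k, e k i j := by
    rw [calE, mittagLeffler]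
    rw [show (∑' k : ℕ, (Real.Gamma (α * k + α))⁻¹ • ((u ^ α) • A) ^ k) = ∑' k, e k from rfl]
    exact (congrFun (tsum_apply hSmat) j).trans (tsum_apply (Pi.summable.mp hSmat i))
  rw [happ]
  calc |∑' k, e k i j| ≤ ∑' k, |e k i j| := by
        simpa [Real.norm_eq_abs] using norm_tsum_le_tsum_norm (f := fun k => e k i j)
          (by simpa [Real.norm_eq_abs] using hsum_abs)
    _ ≤ ∑' k : ℕ, r ^ k * (Real.Gamma (α * k + α))⁻¹ :=
        Summable.tsum_le_tsum (hbound i j) hsum_abs hmaster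

lemma rpow_add_le14 {x y p : ℝ} (hx : 0 ≤ x) (hy : 0 ≤ y) (hp0 : 0 ≤ p) (hp1 : p ≤ 1) :
    (x + y) ^ p ≤ x ^ p + y ^ p := by
  have h := NNReal.rpow_add_le_add_rpow x.toNNReal y.toNNReal hp0 hp1
  rw [← NNReal.coe_le_coe] at h
  push_cast at h
  rwa [Real.coe_toNNReal _ hx, Real.coe_toNNReal _ hy] at h

lemma integral_bound14 {p : ℝ} (hp0 : 0 < p) (hp1 : p ≤ 1) {t h : ℝ} (ht : 0 ≤ t) (hh : 0 < h) :
    ∫ s in Set.Ioc t (t + h), s ^ (p - 1) ≤ h ^ p / p := by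
  have hle : t ≤ t + h := by linarith
  rw [← intervalIntegral.integral_of_le hle, integral_rpow (Or.inl (by linarith))]
  have hpe : p - 1 + 1 = p := by ring
  rw [hpe]
  have key : (t + h) ^ p - t ^ p ≤ h ^ p := by
    have := rpow_add_le14 ht hh.le hp0.le hp1
    linarith
  gcongr

lemma integrableOn_rpow14 {q : ℝ} (hq : -1 < q) {t h : ℝ} (hle : t ≤ t + h) (c : ℝ) :
    MeasureTheory.IntegrableOn (fun s : ℝ => c * s ^ q) (Set.Ioc t (t + h)) volume := by
  have h1 : IntervalIntegrable (fun s : ℝ => s ^ q) volume t (t + h) :=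
    intervalIntegral.intervalIntegrable_rpow' hq
  have h2 : IntervalIntegrable (fun s : ℝ => c * s ^ q) volume t (t + h) := h1.const_mul c
  have := intervalIntegrable_iff.mp h2
  rwa [Set.uIoc_of_le hle] at this

end Stmt14Aux

theorem stmt14 (α : ℝ) (hα1 : 1 / 2 < α) (hα2 : α < 1) (d : ℕ) (hd : 1 ≤ d)
    (A : Matrix (Fin d) (Fin d) ℝ) (hA : IsNegDef A) (T : ℝ) (hT : 0 < T) :
    ∃ C : ℝ, 0 < C ∧
      ∀ t : ℝ, t ∈ Set.Icc 0 T → ∀ h : ℝ, 0 < h → h ≤ T →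
        (∫ s in Set.Ioc t (t + h), frobNorm (kerK α A s)) ≤ C * h ^ α ∧
        (∫ s in Set.Ioc t (t + h), (frobNorm (kerK α A s)) ^ 2) ≤ C * h ^ (2 * α - 1) := by
  have hα0 : (0:ℝ) < α := by linarith
  set m : ℝ := ∑ a, ∑ b, |A a b| with hm
  have hm0 : 0 ≤ m := Finset.sum_nonneg fun a _ => Finset.sum_nonneg fun b _ => abs_nonneg _
  set r : ℝ := (2 * T) ^ α * m with hr
  have hr0 : 0 ≤ r := mul_nonneg (Real.rpow_nonneg (by linarith) _) hm0
  set S : ℝ := ∑' k : ℕ, r ^ k * (Real.Gamma (α * k + α))⁻¹ with hS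
  have hS0 : 0 ≤ S := tsum_nonneg fun k =>
    mul_nonneg (pow_nonneg hr0 _)
      (inv_nonneg.mpr (Real.Gamma_pos_of_pos (by positivity)).le)
  set C0 : ℝ := d * S with hC0
  have hC00 : 0 ≤ C0 := mul_nonneg (Nat.cast_nonneg d) hS0
  have h2α : (0:ℝ) < 2 * α - 1 := by linarith
  have hcd1 : 0 ≤ C0 / α := div_nonneg hC00 hα0.le
  have hcd2 : 0 ≤ C0 ^ 2 / (2 * α - 1) := div_nonneg (sq_nonneg _) h2α.le
  refine ⟨C0 / α + C0 ^ 2 / (2 * α - 1) + 1, by linarith, ?_⟩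
  intro t ht h hh0 hhT
  have hle : t ≤ t + h := by linarith
  have hker : ∀ s ∈ Set.Ioc t (t + h), frobNorm (kerK α A s) ≤ C0 * s ^ (α - 1) := by
    intro s hs
    have hs0 : 0 < s := lt_of_le_of_lt ht.1 hs.1
    have hs2T : s ≤ 2 * T := by
      have h1 := hs.2
      have h2 := ht.2
      linarith
    have hent : ∀ i j, |calE α A s i j| ≤ S := fun i j =>
      calE_entry_bound14 hα1 hα2 A hs0 hs2T i j
    have hfe : frobNorm (calE α A s) ≤ d * S := frobNorm_le14 _ S hS0 hent
    rw [kerK, frobNorm_smul14]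
    have hcalK : calK α s = s ^ (α - 1) := if_pos hs0
    rw [hcalK, abs_of_nonneg (Real.rpow_nonneg hs0.le _)]
    calc s ^ (α - 1) * frobNorm (calE α A s) ≤ s ^ (α - 1) * ((d : ℝ) * S) :=
          mul_le_mul_of_nonneg_left hfe (Real.rpow_nonneg hs0.le _)
      _ = C0 * s ^ (α - 1) := by rw [hC0]; ring
  constructor
  · have hg : MeasureTheory.IntegrableOn (fun s : ℝ => C0 * s ^ (α - 1))
        (Set.Ioc t (t + h)) volume := integrableOn_rpow14 (by linarith) hle C0
    have hmono : (∫ s in Set.Ioc t (t + h), frobNorm (kerK α A s)) ≤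
        ∫ s in Set.Ioc t (t + h), C0 * s ^ (α - 1) :=
      integral_mono_of_nonneg (Eventually.of_forall fun s => frobNorm_nonneg14 _) hg
        ((ae_restrict_iff' measurableSet_Ioc).mpr (Eventually.of_forall hker))
    refine hmono.trans ?_
    rw [MeasureTheory.integral_const_mul]
    have hb : (∫ s in Set.Ioc t (t + h), s ^ (α - 1)) ≤ h ^ α / α :=
      integral_bound14 hα0 hα2.le ht.1 hh0
    have hhα : (0:ℝ) ≤ h ^ α := Real.rpow_nonneg hh0.le _
    calc C0 * ∫ s in Set.Ioc t (t + h), s ^ (α - 1) ≤ C0 * (h ^ α / α) :=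
          mul_le_mul_of_nonneg_left hb hC00
      _ = (C0 / α) * h ^ α := by ring
      _ ≤ (C0 / α + C0 ^ 2 / (2 * α - 1) + 1) * h ^ α := by nlinarith
  · have hker2 : ∀ s ∈ Set.Ioc t (t + h),
        (frobNorm (kerK α A s)) ^ 2 ≤ C0 ^ 2 * s ^ (2 * α - 1 - 1) := by
      intro s hs
      have hs0 : 0 < s := lt_of_le_of_lt ht.1 hs.1
      have h1 : (frobNorm (kerK α A s)) ^ 2 ≤ (C0 * s ^ (α - 1)) ^ 2 :=
        pow_le_pow_left₀ (frobNorm_nonneg14 _) (hker s hs) 2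
      have h2 : (s ^ (α - 1)) ^ 2 = s ^ (2 * α - 1 - 1) := by
        rw [← Real.rpow_natCast (s ^ (α - 1)) 2, ← Real.rpow_mul hs0.le]
        norm_num
        ring_nf
      calc (frobNorm (kerK α A s)) ^ 2 ≤ (C0 * s ^ (α - 1)) ^ 2 := h1
        _ = C0 ^ 2 * (s ^ (α - 1)) ^ 2 := by ring
        _ = C0 ^ 2 * s ^ (2 * α - 1 - 1) := by rw [h2]
    have hg : MeasureTheory.IntegrableOn (fun s : ℝ => C0 ^ 2 * s ^ (2 * α - 1 - 1))
        (Set.Ioc t (t + h)) volume := integrableOn_rpow14 (by linarith) hle (C0 ^ 2)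
    have hmono : (∫ s in Set.Ioc t (t + h), (frobNorm (kerK α A s)) ^ 2) ≤
        ∫ s in Set.Ioc t (t + h), C0 ^ 2 * s ^ (2 * α - 1 - 1) :=
      integral_mono_of_nonneg (Eventually.of_forall fun s => sq_nonneg _) hg
        ((ae_restrict_iff' measurableSet_Ioc).mpr (Eventually.of_forall hker2))
    refine hmono.trans ?_
    rw [MeasureTheory.integral_const_mul]
    have hb : (∫ s in Set.Ioc t (t + h), s ^ (2 * α - 1 - 1)) ≤ h ^ (2 * α - 1) / (2 * α - 1) :=
      integral_bound14 h2α (by linarith) ht.1 hh0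
    have hhα : (0:ℝ) ≤ h ^ (2 * α - 1) := Real.rpow_nonneg hh0.le _
    calc C0 ^ 2 * ∫ s in Set.Ioc t (t + h), s ^ (2 * α - 1 - 1)
          ≤ C0 ^ 2 * (h ^ (2 * α - 1) / (2 * α - 1)) :=
          mul_le_mul_of_nonneg_left hb (sq_nonneg _)
      _ = (C0 ^ 2 / (2 * α - 1)) * h ^ (2 * α - 1) := by ring
      _ ≤ (C0 / α + C0 ^ 2 / (2 * α - 1) + 1) * h ^ (2 * α - 1) := by nlinarith
end

section
/- Fix T > 0. There exists a constant C > 0, depending only on α, d, A and T, such that for every positive integer n with step size h = T/n, every t ∈ [0, T], and every δ > 0: ∫₀^{max(t−δ, 0)} |K(t−s) − K(t−s̲)|² ds ≤ C n^{−2α} + C n^{−2} δ^{2α−3}. -/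
open MeasureTheory Filter

section AuxLemmas19

lemma gammapos {α : ℝ} (hα : 0 < α) (k : ℕ) : 0 < Real.Gamma (α * k + α) :=
  Real.Gamma_pos_of_pos (by positivity)

lemma step_half {α : ℝ} (hα1 : 1 / 2 < α) (hα2 : α < 1) {y : ℝ} (hy : 0 ≤ y) :
    ∃ K : ℕ, ∀ m : ℕ, K ≤ m →
      ((m:ℝ)+2+1) * y^(m+2) * (Real.Gamma (α*(m+2)+α))⁻¹
        ≤ (1/2) * (((m:ℝ)+1) * y^m * (Real.Gamma (α*m+α))⁻¹) := by
  have hα : 0 < α := by linarith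
  obtain ⟨K, hK⟩ := exists_nat_ge ((6 * y ^ 2 + 1) / α)
  refine ⟨K + 1, fun m hm => ?_⟩
  have hm1 : (1:ℝ) ≤ m := by exact_mod_cast Nat.one_le_iff_ne_zero.mpr (by omega)
  have hmK : (K:ℝ) ≤ m := by exact_mod_cast le_of_add_le_left hm
  have hG : 0 < Real.Gamma (α*m+α) := gammapos hα m
  have hG2 : 0 < Real.Gamma (α*(m+2)+α) := by have := gammapos hα (m+2); push_cast at this; exact this
  have hx1 : (2:ℝ) ≤ α*m+α+1 := by nlinarith
  -- Gamma monotonicity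
  have hmono : Real.Gamma (α*m+α+1) ≤ Real.Gamma (α*(m+2)+α) := by
    rcases eq_or_lt_of_le (show α*m+α+1 ≤ α*(m+2)+α by nlinarith) with h | h
    · rw [h]
    · exact le_of_lt (Real.Gamma_strictMonoOn_Ici hx1 (le_trans hx1 (by nlinarith)) h)
  have hrec : Real.Gamma (α*m+α+1) = (α*m+α) * Real.Gamma (α*m+α) :=
    Real.Gamma_add_one (by positivity)
  have hGlow : (α*m+α) * Real.Gamma (α*m+α) ≤ Real.Gamma (α*(m+2)+α) := hrec ▸ hmono
  have hpos : (0:ℝ) < α*m+α := by positivity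
  have hinv : (Real.Gamma (α*(m+2)+α))⁻¹ ≤ ((α*m+α) * Real.Gamma (α*m+α))⁻¹ := by
    apply inv_anti₀ (by positivity) hGlow
  have hy2 : 6 * y^2 + 1 ≤ α * m + α := by
    have := (div_le_iff₀ hα).mp (hK.trans hmK)
    nlinarith
  calc ((m:ℝ)+2+1) * y^(m+2) * (Real.Gamma (α*(m+2)+α))⁻¹
      ≤ ((m:ℝ)+2+1) * y^(m+2) * ((α*m+α) * Real.Gamma (α*m+α))⁻¹ :=
        mul_le_mul_of_nonneg_left hinv (by positivity)
    _ = (((m:ℝ)+2+1) * y^2 / (α*m+α)) * (y^m * (Real.Gamma (α*m+α))⁻¹) := by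
        rw [mul_inv, pow_add]; ring
    _ ≤ ((1/2) * ((m:ℝ)+1)) * (y^m * (Real.Gamma (α*m+α))⁻¹) := by
        apply mul_le_mul_of_nonneg_right _ (by positivity)
        rw [div_le_iff₀ hpos]
        nlinarith [pow_nonneg hy 2, sq_nonneg y]
    _ = (1/2) * (((m:ℝ)+1) * y^m * (Real.Gamma (α*m+α))⁻¹) := by ring

lemma aux_summable {α : ℝ} (hα1 : 1 / 2 < α) (hα2 : α < 1) {y : ℝ} (hy : 0 ≤ y) :
    Summable (fun k : ℕ => ((k:ℝ)+1) * y^k * (Real.Gamma (α*k+α))⁻¹) := by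
  have hα : 0 < α := by linarith
  set c : ℕ → ℝ := fun k => ((k:ℝ)+1) * y^k * (Real.Gamma (α*k+α))⁻¹ with hc
  have hcn : ∀ k, 0 ≤ c k := fun k => by
    have := gammapos hα k; positivity
  obtain ⟨K, hK⟩ := step_half hα1 hα2 hy
  have hkey : ∀ m : ℕ, K ≤ m → c (m+2) ≤ (1/2) * c m := by
    intro m hm
    have := hK m hm
    simpa [hc, Nat.cast_add] using this
  have heven : Summable (fun k : ℕ => c (2*k)) := by
    apply summable_of_ratio_norm_eventually_le (r := 1/2) (by norm_num)
    filter_upwards [eventually_ge_atTop K] with k hk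
    rw [Real.norm_eq_abs, Real.norm_eq_abs, abs_of_nonneg (hcn _), abs_of_nonneg (hcn _)]
    have : 2*(k+1) = 2*k+2 := by ring
    rw [this]
    exact hkey (2*k) (by omega)
  have hodd : Summable (fun k : ℕ => c (2*k+1)) := by
    apply summable_of_ratio_norm_eventually_le (r := 1/2) (by norm_num)
    filter_upwards [eventually_ge_atTop K] with k hk
    rw [Real.norm_eq_abs, Real.norm_eq_abs, abs_of_nonneg (hcn _), abs_of_nonneg (hcn _)]
    have : 2*(k+1)+1 = (2*k+1)+2 := by ring
    rw [this]
    exact hkey (2*k+1) (by omega)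
  exact heven.even_add_odd hodd

/-- MVT bound for rpow with exponent ≤ 1 on positive reals. -/
lemma rpow_diff_le {p u v : ℝ} (hp : p ≤ 1) (hu : 0 < u) (huv : u ≤ v) :
    |v ^ p - u ^ p| ≤ |p| * u ^ (p - 1) * (v - u) := by
  have hs : Convex ℝ (Set.Icc u v) := convex_Icc u v
  have hderiv : ∀ x ∈ Set.Icc u v, HasDerivWithinAt (fun x : ℝ => x ^ p)
      (p * x ^ (p-1)) (Set.Icc u v) x := by
    intro x hx
    exact (Real.hasDerivAt_rpow_const (Or.inl (ne_of_gt (lt_of_lt_of_le hu hx.1)))).hasDerivWithinAt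
  have hbound : ∀ x ∈ Set.Icc u v, ‖p * x ^ (p-1)‖ ≤ |p| * u ^ (p-1) := by
    intro x hx
    have hxpos : 0 < x := lt_of_lt_of_le hu hx.1
    rw [norm_mul, Real.norm_eq_abs, Real.norm_eq_abs, abs_of_nonneg (Real.rpow_nonneg hxpos.le _)]
    exact mul_le_mul_of_nonneg_left
      (Real.rpow_le_rpow_of_nonpos hu hx.1 (by linarith)) (abs_nonneg p)
  have := Convex.norm_image_sub_le_of_norm_hasDerivWithin_le hderiv hbound hs
    (Set.left_mem_Icc.2 huv) (Set.right_mem_Icc.2 huv)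
  rw [Real.norm_eq_abs, Real.norm_eq_abs, abs_of_nonneg (by linarith : (0:ℝ) ≤ v - u)] at this
  exact this

/-- Entrywise bound for matrix powers. -/
lemma matrix_pow_entry_le {d : ℕ} (A : Matrix (Fin d) (Fin d) ℝ) (k : ℕ) (i j : Fin d) :
    |(A ^ k) i j| ≤ (∑ i', ∑ j', |A i' j'|) ^ k := by
  induction k generalizing i j with
  | zero =>
    simp only [pow_zero]
    by_cases h : i = j <;> simp [Matrix.one_apply, h]
  | succ k ih =>
    rw [pow_succ]
    have hr : (0:ℝ) ≤ ∑ i', ∑ j', |A i' j'| :=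
      Finset.sum_nonneg fun _ _ => Finset.sum_nonneg fun _ _ => abs_nonneg _
    calc |(A ^ k * A) i j| = |∑ l, (A ^ k) i l * A l j| := by rw [Matrix.mul_apply]
      _ ≤ ∑ l, |(A ^ k) i l * A l j| := Finset.abs_sum_le_sum_abs _ _
      _ ≤ ∑ l, (∑ i', ∑ j', |A i' j'|) ^ k * |A l j| := by
          apply Finset.sum_le_sum
          intro l _
          rw [abs_mul]
          exact mul_le_mul_of_nonneg_right (ih i l) (abs_nonneg _)
      _ = (∑ i', ∑ j', |A i' j'|) ^ k * ∑ l, |A l j| := by rw [← Finset.mul_sum]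
      _ ≤ (∑ i', ∑ j', |A i' j'|) ^ k * ∑ i', ∑ j', |A i' j'| := by
          apply mul_le_mul_of_nonneg_left _ (pow_nonneg hr k)
          calc ∑ l, |A l j| ≤ ∑ l, ∑ j', |A l j'| :=
                Finset.sum_le_sum fun l _ => Finset.single_le_sum
                  (f := fun j' => |A l j'|) (fun _ _ => abs_nonneg _) (Finset.mem_univ j)
            _ = ∑ i', ∑ j', |A i' j'| := rfl
      _ = (∑ i', ∑ j', |A i' j'|) ^ (k+1) := by rw [pow_succ]

lemma pow_diff_le {a b : ℝ} (ha : 0 ≤ a) (hab : a ≤ b) (k : ℕ) :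
    b ^ k - a ^ k ≤ k * b ^ (k-1) * (b - a) := by
  have hb : 0 ≤ b := ha.trans hab
  rw [← geom_sum₂_mul b a k]
  apply mul_le_mul_of_nonneg_right _ (by linarith)
  have h1 : ∀ i ∈ Finset.range k, b ^ i * a ^ (k-1-i) ≤ b ^ (k-1) := by
    intro i hi
    rw [Finset.mem_range] at hi
    have : b ^ i * a ^ (k-1-i) ≤ b ^ i * b ^ (k-1-i) :=
      mul_le_mul_of_nonneg_left (pow_le_pow_left₀ ha hab _) (pow_nonneg hb i)
    refine this.trans_eq ?_
    rw [← pow_add]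
    congr 1
    omega
  calc ∑ i ∈ Finset.range k, b ^ i * a ^ (k-1-i) ≤ ∑ _i ∈ Finset.range k, b ^ (k-1) :=
        Finset.sum_le_sum h1
    _ = k * b ^ (k-1) := by rw [Finset.sum_const, Finset.card_range, nsmul_eq_mul]

lemma calE_entry {d : ℕ} (α : ℝ)
    (A : Matrix (Fin d) (Fin d) ℝ) (w : ℝ)
    (hsum : ∀ i j, Summable fun k : ℕ =>
      (Real.Gamma (α * k + α))⁻¹ * (w ^ α) ^ k * (A ^ k) i j) (i j : Fin d) :
    calE α A w i j = ∑' k : ℕ, (Real.Gamma (α * k + α))⁻¹ * (w ^ α) ^ k * (A ^ k) i j := by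
  have hform : ∀ k : ℕ, (Real.Gamma (α * k + α))⁻¹ • ((w ^ α) • A) ^ k
      = (fun i' j' => (Real.Gamma (α * k + α))⁻¹ * (w ^ α) ^ k * (A ^ k) i' j' :
          Matrix (Fin d) (Fin d) ℝ) := by
    intro k
    funext i' j'
    rw [smul_pow, smul_smul]
    simp [Matrix.smul_apply, smul_eq_mul, mul_assoc]
  have hS : Summable (fun k : ℕ => (Real.Gamma (α * k + α))⁻¹ • ((w ^ α) • A) ^ k) := by
    have : (fun k : ℕ => (Real.Gamma (α * k + α))⁻¹ • ((w ^ α) • A) ^ k)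
        = fun k : ℕ => (fun i' j' => (Real.Gamma (α * k + α))⁻¹ * (w ^ α) ^ k * (A ^ k) i' j' :
            Matrix (Fin d) (Fin d) ℝ) := funext hform
    rw [this]; apply Pi.summable.mpr
    intro i'
    rw [Pi.summable]
    intro j'
    exact hsum i' j'
  have h1 : calE α A w i j
      = (∑' k : ℕ, ((Real.Gamma (α * k + α))⁻¹ • ((w ^ α) • A) ^ k) i) j := by
    unfold calE mittagLeffler
    exact congrFun (tsum_apply (f := fun k : ℕ => ((Real.Gamma (α * k + α))⁻¹ • ((w ^ α) • A) ^ k : Fin d → Fin d → ℝ)) hS) j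
  rw [h1, tsum_apply (Pi.summable.mp hS i)]
  congr 1
  funext k
  rw [hform k]

lemma abs_tsum_le' {f : ℕ → ℝ} (h : Summable fun k => |f k|) :
    |∑' k, f k| ≤ ∑' k, |f k| := by
  have := norm_tsum_le_tsum_norm (f := f) (by simpa [Real.norm_eq_abs] using h)
  simpa [Real.norm_eq_abs] using this

lemma kerK_diff_bound {d : ℕ} {α : ℝ} (hα1 : 1/2 < α) (hα2 : α < 1)
    (A : Matrix (Fin d) (Fin d) ℝ) {T : ℝ} (hT : 0 < T) :
    ∃ D : ℝ, 0 < D ∧ ∀ u v : ℝ, 0 < u → u ≤ v → v ≤ T → ∀ i j,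
      |kerK α A u i j - kerK α A v i j| ≤ D * u ^ (α - 2) * (v - u) := by
  have hα : 0 < α := by linarith
  set r : ℝ := ∑ i', ∑ j', |A i' j'| with hr
  have hr0 : 0 ≤ r := Finset.sum_nonneg fun _ _ => Finset.sum_nonneg fun _ _ => abs_nonneg _
  set B : ℝ := max 1 (T ^ α) with hB
  have hB1 : (1:ℝ) ≤ B := le_max_left _ _
  have hB0 : 0 ≤ B := by linarith
  set y : ℝ := r * B with hy
  have hy0 : 0 ≤ y := mul_nonneg hr0 hB0
  set c : ℕ → ℝ := fun k => ((k:ℝ)+1) * y^k * (Real.Gamma (α*k+α))⁻¹ with hc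
  have hcS : Summable c := aux_summable hα1 hα2 hy0
  have hc0 : ∀ k, 0 ≤ c k := fun k => by
    have := gammapos hα k; positivity
  set C1 : ℝ := ∑' k, c k with hC1
  have hC10 : 0 ≤ C1 := tsum_nonneg hc0
  -- basic facts for w ∈ (0, T]
  have hwB : ∀ w : ℝ, 0 < w → w ≤ T → w ^ α ≤ B := by
    intro w hw hwT
    exact le_trans (Real.rpow_le_rpow hw.le hwT hα.le) (le_max_right _ _)
  have hgb : ∀ w : ℝ, 0 < w → w ≤ T → ∀ i j, ∀ k : ℕ,
      |(Real.Gamma (α * k + α))⁻¹ * (w ^ α) ^ k * (A ^ k) i j| ≤ c k := by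
    intro w hw hwT i j k
    have hG := gammapos hα k
    have hwa : 0 ≤ w ^ α := Real.rpow_nonneg hw.le α
    rw [abs_mul, abs_mul, abs_of_nonneg (le_of_lt (inv_pos.mpr hG)),
      abs_of_nonneg (pow_nonneg hwa k)]
    calc (Real.Gamma (α * k + α))⁻¹ * (w ^ α) ^ k * |(A ^ k) i j|
        ≤ (Real.Gamma (α * k + α))⁻¹ * B ^ k * r ^ k := by
          apply mul_le_mul (mul_le_mul_of_nonneg_left
            (pow_le_pow_left₀ hwa (hwB w hw hwT) k) (le_of_lt (inv_pos.mpr hG)))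
            (matrix_pow_entry_le A k i j) (abs_nonneg _) (by positivity)
      _ = 1 * y ^ k * (Real.Gamma (α * k + α))⁻¹ := by rw [hy, mul_pow]; ring
      _ ≤ c k := by
          apply mul_le_mul_of_nonneg_right _ (le_of_lt (inv_pos.mpr hG))
          apply mul_le_mul_of_nonneg_right _ (pow_nonneg hy0 k)
          push_cast; linarith [Nat.cast_nonneg (α := ℝ) k]
  have hgS : ∀ w : ℝ, 0 < w → w ≤ T → ∀ i j, Summable fun k : ℕ =>
      (Real.Gamma (α * k + α))⁻¹ * (w ^ α) ^ k * (A ^ k) i j := by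
    intro w hw hwT i j
    apply Summable.of_abs
    exact Summable.of_nonneg_of_le (fun k => abs_nonneg _) (hgb w hw hwT i j) hcS
  -- entry bound for calE
  have hEb : ∀ w : ℝ, 0 < w → w ≤ T → ∀ i j, |calE α A w i j| ≤ C1 := by
    intro w hw hwT i j
    rw [calE_entry α A w (hgS w hw hwT)]
    have habs : Summable fun k : ℕ =>
        |(Real.Gamma (α * k + α))⁻¹ * (w ^ α) ^ k * (A ^ k) i j| :=
      Summable.of_nonneg_of_le (fun k => abs_nonneg _) (hgb w hw hwT i j) hcS
    calc |∑' k : ℕ, (Real.Gamma (α * k + α))⁻¹ * (w ^ α) ^ k * (A ^ k) i j|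
        ≤ ∑' k : ℕ, |(Real.Gamma (α * k + α))⁻¹ * (w ^ α) ^ k * (A ^ k) i j| :=
          abs_tsum_le' habs
      _ ≤ C1 := Summable.tsum_le_tsum (hgb w hw hwT i j) habs hcS
  -- entry bound for calE differences
  have hEd : ∀ u v : ℝ, 0 < u → u ≤ v → v ≤ T → ∀ i j,
      |calE α A u i j - calE α A v i j| ≤ C1 * (v ^ α - u ^ α) := by
    intro u v hu huv hvT i j
    have hv : 0 < v := lt_of_lt_of_le hu huv
    have huT : u ≤ T := huv.trans hvT
    have hSu := hgS u hu huT i j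
    have hSv := hgS v hv hvT i j
    have hab : u ^ α ≤ v ^ α := Real.rpow_le_rpow hu.le huv hα.le
    have ha0 : 0 ≤ u ^ α := Real.rpow_nonneg hu.le α
    rw [calE_entry α A u (hgS u hu huT), calE_entry α A v (hgS v hv hvT), ← Summable.tsum_sub hSu hSv]
    have hterm : ∀ k : ℕ,
        |(Real.Gamma (α * k + α))⁻¹ * (u ^ α) ^ k * (A ^ k) i j
          - (Real.Gamma (α * k + α))⁻¹ * (v ^ α) ^ k * (A ^ k) i j|
        ≤ (v ^ α - u ^ α) * c k := by
      intro k
      have hG := gammapos hα k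
      have h1 : (Real.Gamma (α * k + α))⁻¹ * (u ^ α) ^ k * (A ^ k) i j
          - (Real.Gamma (α * k + α))⁻¹ * (v ^ α) ^ k * (A ^ k) i j
          = (Real.Gamma (α * k + α))⁻¹ * ((u ^ α) ^ k - (v ^ α) ^ k) * (A ^ k) i j := by ring
      rw [h1, abs_mul, abs_mul, abs_of_nonneg (le_of_lt (inv_pos.mpr hG))]
      have h2 : |(u ^ α) ^ k - (v ^ α) ^ k| ≤ k * B ^ (k-1) * (v ^ α - u ^ α) := by
        rw [abs_sub_comm, abs_of_nonneg (by linarith [pow_le_pow_left₀ ha0 hab k] :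
          (0:ℝ) ≤ (v ^ α) ^ k - (u ^ α) ^ k)]
        refine (pow_diff_le ha0 hab k).trans ?_
        apply mul_le_mul_of_nonneg_right _ (by linarith)
        apply mul_le_mul_of_nonneg_left _ (Nat.cast_nonneg k)
        exact pow_le_pow_left₀ (Real.rpow_nonneg hv.le α) (hwB v hv hvT) _
      calc (Real.Gamma (α * k + α))⁻¹ * |(u ^ α) ^ k - (v ^ α) ^ k| * |(A ^ k) i j|
          ≤ (Real.Gamma (α * k + α))⁻¹ * ((k:ℝ) * B ^ (k-1) * (v ^ α - u ^ α)) * r ^ k := by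
            apply mul_le_mul (mul_le_mul_of_nonneg_left h2 (le_of_lt (inv_pos.mpr hG)))
              (matrix_pow_entry_le A k i j) (abs_nonneg _)
            have : (0:ℝ) ≤ v ^ α - u ^ α := by linarith
            positivity
        _ ≤ (v ^ α - u ^ α) * c k := by
            have hBk : B ^ (k-1) * r ^ k ≤ B ^ k * r ^ k := by
              apply mul_le_mul_of_nonneg_right _ (pow_nonneg hr0 k)
              exact pow_le_pow_right₀ hB1 (Nat.sub_le k 1)
            have hk1 : (k:ℝ) ≤ (k:ℝ) + 1 := by linarith
            have hd : (0:ℝ) ≤ v ^ α - u ^ α := by linarith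
            have hyk : y ^ k = r ^ k * B ^ k := by rw [hy, mul_pow]
            have hG' : (0:ℝ) ≤ (Real.Gamma (α * k + α))⁻¹ := le_of_lt (inv_pos.mpr hG)
            rw [show c k = ((k:ℝ)+1) * y ^ k * (Real.Gamma (α*(k:ℕ)+α))⁻¹ from rfl, hyk]
            nlinarith [mul_le_mul_of_nonneg_left hBk
                (mul_nonneg (mul_nonneg hd hG') (Nat.cast_nonneg (α:=ℝ) k)),
              mul_nonneg (mul_nonneg hd hG')
                (mul_nonneg (pow_nonneg hr0 k) (pow_nonneg hB0 k))]
    have habs : Summable fun k : ℕ =>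
        |(Real.Gamma (α * k + α))⁻¹ * (u ^ α) ^ k * (A ^ k) i j
          - (Real.Gamma (α * k + α))⁻¹ * (v ^ α) ^ k * (A ^ k) i j| :=
      Summable.of_nonneg_of_le (fun k => abs_nonneg _) hterm (hcS.mul_left _)
    calc |∑' k : ℕ, ((Real.Gamma (α * k + α))⁻¹ * (u ^ α) ^ k * (A ^ k) i j
          - (Real.Gamma (α * k + α))⁻¹ * (v ^ α) ^ k * (A ^ k) i j)|
        ≤ ∑' k : ℕ, |(Real.Gamma (α * k + α))⁻¹ * (u ^ α) ^ k * (A ^ k) i j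
          - (Real.Gamma (α * k + α))⁻¹ * (v ^ α) ^ k * (A ^ k) i j| :=
          abs_tsum_le' habs
      _ ≤ ∑' k : ℕ, (v ^ α - u ^ α) * c k := Summable.tsum_le_tsum hterm habs (hcS.mul_left _)
      _ = C1 * (v ^ α - u ^ α) := by rw [tsum_mul_left, hC1]; ring
  -- now assemble
  refine ⟨(1-α) * C1 + α * C1 * B + 1, by nlinarith [mul_nonneg (by linarith : (0:ℝ) ≤ 1-α) hC10, mul_nonneg (mul_nonneg hα.le hC10) hB0], ?_⟩
  intro u v hu huv hvT i j
  have hv : 0 < v := lt_of_lt_of_le hu huv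
  have huT : u ≤ T := huv.trans hvT
  have hKu : kerK α A u i j = u ^ (α-1) * calE α A u i j := by
    unfold kerK calK
    rw [if_pos hu, Matrix.smul_apply, smul_eq_mul]
  have hKv : kerK α A v i j = v ^ (α-1) * calE α A v i j := by
    unfold kerK calK
    rw [if_pos hv, Matrix.smul_apply, smul_eq_mul]
  have hsplit : kerK α A u i j - kerK α A v i j
      = (u ^ (α-1) - v ^ (α-1)) * calE α A v i j
        + u ^ (α-1) * (calE α A u i j - calE α A v i j) := by
    rw [hKu, hKv]; ring
  have hK1 : |u ^ (α-1) - v ^ (α-1)| ≤ (1-α) * u ^ (α-2) * (v - u) := by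
    have := rpow_diff_le (p := α - 1) (by linarith) hu huv
    rw [abs_sub_comm] at this
    refine this.trans_eq ?_
    rw [abs_of_nonpos (by linarith : α - 1 ≤ 0)]
    ring_nf
  have hK2 : |v ^ α - u ^ α| ≤ α * u ^ (α-1) * (v - u) := by
    have := rpow_diff_le (p := α) (by linarith) hu huv
    rwa [abs_of_nonneg hα.le] at this
  have hu1 : 0 ≤ u ^ (α-1) := Real.rpow_nonneg hu.le _
  have hu2 : 0 ≤ u ^ (α-2) := Real.rpow_nonneg hu.le _
  have hd0 : (0:ℝ) ≤ v - u := by linarith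
  have hVa : v ^ α - u ^ α ≤ α * u ^ (α-1) * (v - u) := by
    have hab : u ^ α ≤ v ^ α := Real.rpow_le_rpow hu.le huv hα.le
    calc v ^ α - u ^ α = |v ^ α - u ^ α| := (abs_of_nonneg (by linarith)).symm
      _ ≤ α * u ^ (α-1) * (v - u) := hK2
  calc |kerK α A u i j - kerK α A v i j|
      ≤ |u ^ (α-1) - v ^ (α-1)| * |calE α A v i j|
        + u ^ (α-1) * |calE α A u i j - calE α A v i j| := by
        rw [hsplit]
        refine (abs_add_le _ _).trans ?_
        rw [abs_mul, abs_mul, abs_of_nonneg hu1]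
    _ ≤ ((1-α) * u ^ (α-2) * (v - u)) * C1
        + u ^ (α-1) * (C1 * (α * u ^ (α-1) * (v - u))) := by
        apply add_le_add
        · exact mul_le_mul hK1 (hEb v hv hvT i j) (abs_nonneg _) (mul_nonneg (mul_nonneg (by linarith) hu2) hd0)
        · apply mul_le_mul_of_nonneg_left _ hu1
          exact (hEd u v hu huv hvT i j).trans
            (mul_le_mul_of_nonneg_left hVa hC10)
    _ ≤ ((1-α) * C1) * u ^ (α-2) * (v - u) + (α * C1 * B) * u ^ (α-2) * (v - u) := by
        apply add_le_add
        · apply le_of_eq; ring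
        · have h2a : u ^ (α-1) * u ^ (α-1) = u ^ (α-2) * u ^ α := by
            rw [← Real.rpow_add hu, ← Real.rpow_add hu]; ring_nf
          have huB : u ^ α ≤ B := hwB u hu huT
          calc u ^ (α-1) * (C1 * (α * u ^ (α-1) * (v - u)))
              = (α * C1 * (v - u)) * (u ^ (α-1) * u ^ (α-1)) := by ring
            _ = (α * C1 * (v - u)) * (u ^ (α-2) * u ^ α) := by rw [h2a]
            _ ≤ (α * C1 * (v - u)) * (u ^ (α-2) * B) := by
                apply mul_le_mul_of_nonneg_left
                  (mul_le_mul_of_nonneg_left huB hu2) (by positivity)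
            _ = (α * C1 * B) * u ^ (α-2) * (v - u) := by ring
    _ ≤ ((1-α) * C1 + α * C1 * B + 1) * u ^ (α-2) * (v - u) := by
        have : (0:ℝ) ≤ u ^ (α-2) * (v - u) := mul_nonneg hu2 hd0
        nlinarith

end AuxLemmas19

theorem stmt19 (α : ℝ) (hα1 : 1 / 2 < α) (hα2 : α < 1) (d : ℕ) (hd : 1 ≤ d)
    (A : Matrix (Fin d) (Fin d) ℝ) (hA : IsNegDef A) (T : ℝ) (hT : 0 < T) :
    ∃ C : ℝ, 0 < C ∧
      ∀ n : ℕ, 1 ≤ n → ∀ t : ℝ, t ∈ Set.Icc 0 T → ∀ δ : ℝ, 0 < δ →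
        (∫ s in Set.Ioc (0 : ℝ) (max (t - δ) 0),
            (frobNorm (kerK α A (t - s) - kerK α A (t - grid T n s))) ^ 2)
          ≤ C * (n : ℝ) ^ (-(2 * α)) + C * (n : ℝ) ^ (-2 : ℝ) * δ ^ (2 * α - 3) := by
  obtain ⟨D, hD, hDb⟩ := kerK_diff_bound hα1 hα2 A hT
  have h32 : (0:ℝ) < 3 - 2 * α := by linarith
  refine ⟨(d:ℝ)^2 * D^2 * T^2 / (3 - 2*α) + 1, by positivity, ?_⟩
  set C : ℝ := (d:ℝ)^2 * D^2 * T^2 / (3 - 2*α) + 1 with hC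
  have hC0 : 0 < C := by positivity
  intro n hn t ht δ hδ
  have hn0 : (0:ℝ) < n := by exact_mod_cast hn
  have hh : (0:ℝ) < T / n := div_pos hT hn0
  have hterm1 : 0 ≤ C * (n:ℝ) ^ (-(2*α)) := by positivity
  by_cases hm : t - δ ≤ 0
  · rw [max_eq_right hm, Set.Ioc_self, Measure.restrict_empty, integral_zero_measure]
    positivity
  push_neg at hm
  have hmax : max (t - δ) 0 = t - δ := max_eq_left (by linarith)
  rw [hmax]
  have hδt : δ < t := by linarith
  have htT : t ≤ T := ht.2
  -- pointwise bound on Ioc 0 (t - δ)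
  have hpt : ∀ s ∈ Set.Ioc (0:ℝ) (t - δ),
      (frobNorm (kerK α A (t - s) - kerK α A (t - grid T n s))) ^ 2
        ≤ (d:ℝ)^2 * D^2 * (T/n)^2 * (t - s) ^ (2*α - 4) := by
    intro s hs
    obtain ⟨hs0, hs1⟩ := hs
    set u := t - s with hu
    set v := t - grid T n s with hv
    have hu0 : 0 < u := by simp only [hu]; linarith
    have hgrid_le : grid T n s ≤ s := by
      rw [grid]
      calc (⌊s / (T/n)⌋ : ℝ) * (T/n) ≤ s / (T/n) * (T/n) :=
            mul_le_mul_of_nonneg_right (Int.floor_le _) hh.le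
        _ = s := div_mul_cancel₀ s (ne_of_gt hh)
    have hgrid_nn : 0 ≤ grid T n s := by
      rw [grid]
      have : (0:ℤ) ≤ ⌊s / (T/n)⌋ := Int.floor_nonneg.mpr (by positivity)
      have h0 : (0:ℝ) ≤ (⌊s / (T/n)⌋ : ℝ) := by exact_mod_cast this
      positivity
    have hgrid_close : s - grid T n s ≤ T/n := by
      rw [grid]
      have := Int.lt_floor_add_one (s / (T/n))
      have h1 : s < (⌊s / (T/n)⌋ : ℝ) * (T/n) + T/n := by
        calc s = s / (T/n) * (T/n) := (div_mul_cancel₀ s (ne_of_gt hh)).symm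
          _ < ((⌊s / (T/n)⌋ : ℝ) + 1) * (T/n) := by
              apply mul_lt_mul_of_pos_right this hh
          _ = (⌊s / (T/n)⌋ : ℝ) * (T/n) + T/n := by ring
      linarith
    have huv : u ≤ v := by simp only [hu, hv]; linarith
    have hvT : v ≤ T := by simp only [hv]; linarith
    have hdvu : v - u ≤ T/n := by simp only [hu, hv]; linarith
    have hδu : δ ≤ u := by simp only [hu]; linarith
    -- entry bound
    have hub : ∀ i j, |(kerK α A u - kerK α A v) i j| ≤ D * u ^ (α-2) * (T/n) := by
      intro i j
      rw [Matrix.sub_apply]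
      refine (hDb u v hu0 huv hvT i j).trans ?_
      apply mul_le_mul_of_nonneg_left hdvu
      positivity
    have hfrob : (frobNorm (kerK α A u - kerK α A v)) ^ 2
        = ∑ i, ∑ j, ((kerK α A u - kerK α A v) i j) ^ 2 := by
      rw [frobNorm, Real.sq_sqrt]
      exact Finset.sum_nonneg fun _ _ => Finset.sum_nonneg fun _ _ => sq_nonneg _
    rw [hfrob]
    have hsum : ∑ i, ∑ j, ((kerK α A u - kerK α A v) i j) ^ 2
        ≤ ∑ _i : Fin d, ∑ _j : Fin d, (D * u ^ (α-2) * (T/n)) ^ 2 := by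
      apply Finset.sum_le_sum
      intro i _
      apply Finset.sum_le_sum
      intro j _
      rw [← sq_abs]
      exact pow_le_pow_left₀ (abs_nonneg _) (hub i j) 2
    refine hsum.trans ?_
    rw [Finset.sum_const, Finset.sum_const, Finset.card_univ, Fintype.card_fin,
      nsmul_eq_mul, nsmul_eq_mul]
    have hexp : (u ^ (α-2)) ^ 2 = u ^ (2*α - 4) := by
      rw [← Real.rpow_natCast (u ^ (α-2)) 2, ← Real.rpow_mul hu0.le]
      norm_num
      ring_nf
    apply le_of_eq
    rw [← hexp]
    ring
  -- integrability of the dominating function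
  have hcont : ContinuousOn (fun s : ℝ => (t - s) ^ (2*α - 4)) (Set.Icc 0 (t-δ)) := by
    apply ContinuousOn.rpow_const
    · exact (continuous_const.sub continuous_id).continuousOn
    · intro s hs
      left
      have : t - s ≥ δ := by linarith [hs.2]
      linarith
  have hgint : IntegrableOn (fun s : ℝ => (d:ℝ)^2 * D^2 * (T/n)^2 * (t - s) ^ (2*α - 4))
      (Set.Ioc 0 (t-δ)) := by
    apply Integrable.const_mul
    exact (hcont.integrableOn_Icc).mono_set Set.Ioc_subset_Icc_self
  -- monotone comparison
  have hmono : (∫ s in Set.Ioc (0:ℝ) (t-δ),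
      (frobNorm (kerK α A (t - s) - kerK α A (t - grid T n s))) ^ 2)
      ≤ ∫ s in Set.Ioc (0:ℝ) (t-δ), (d:ℝ)^2 * D^2 * (T/n)^2 * (t - s) ^ (2*α - 4) := by
    apply integral_mono_of_nonneg
    · exact Eventually.of_forall fun s => sq_nonneg _
    · exact hgint
    · rw [EventuallyLE, ae_restrict_iff' measurableSet_Ioc]
      exact Eventually.of_forall hpt
  refine hmono.trans ?_
  -- compute the integral
  have hint : (∫ s in Set.Ioc (0:ℝ) (t-δ), (t - s) ^ (2*α - 4))
      ≤ δ ^ (2*α - 3) / (3 - 2*α) := by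
    have h1 : (∫ s in Set.Ioc (0:ℝ) (t-δ), (t - s) ^ (2*α - 4))
        = ∫ s in (0:ℝ)..(t-δ), (t - s) ^ (2*α - 4) := by
      rw [intervalIntegral.integral_of_le (by linarith : (0:ℝ) ≤ t - δ)]
    rw [h1, intervalIntegral.integral_comp_sub_left (fun x => x ^ (2*α-4)) t]
    have h2 : t - (t - δ) = δ := by ring
    have h3 : t - 0 = t := by ring
    rw [h2, h3]
    rw [integral_rpow (Or.inr ⟨by linarith, by
      intro hmem
      rw [Set.mem_uIcc] at hmem
      rcases hmem with ⟨h4, _⟩ | ⟨_, h5⟩ <;> linarith⟩)]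
    have h6 : 2*α - 4 + 1 = 2*α - 3 := by ring
    rw [h6]
    have ht0' : (0:ℝ) ≤ t ^ (2*α-3) := Real.rpow_nonneg (by linarith) _
    have hval : (t ^ (2*α-3) - δ ^ (2*α-3)) / (2*α-3)
        = (δ ^ (2*α-3) - t ^ (2*α-3)) / (3-2*α) := by
      rw [div_eq_div_iff (by linarith) (by linarith)]
      ring
    rw [hval, div_le_div_iff₀ (by linarith) (by linarith)]
    nlinarith
  -- conclude
  have hδp : (0:ℝ) ≤ δ ^ (2*α - 3) := Real.rpow_nonneg hδ.le _
  have hnp : (0:ℝ) ≤ (n:ℝ) ^ (-2:ℝ) := Real.rpow_nonneg hn0.le _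
  have hnpow : ((n:ℝ)) ^ (-2:ℝ) = ((n:ℝ)^2)⁻¹ := by
    rw [show (-2:ℝ) = -((2:ℕ):ℝ) by norm_num, Real.rpow_neg hn0.le, Real.rpow_natCast]
  calc (∫ s in Set.Ioc (0:ℝ) (t-δ), (d:ℝ)^2 * D^2 * (T/n)^2 * (t - s) ^ (2*α - 4))
      = (d:ℝ)^2 * D^2 * (T/n)^2 * ∫ s in Set.Ioc (0:ℝ) (t-δ), (t - s) ^ (2*α - 4) := by
        rw [integral_const_mul]
    _ ≤ (d:ℝ)^2 * D^2 * (T/n)^2 * (δ ^ (2*α - 3) / (3 - 2*α)) := by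
        apply mul_le_mul_of_nonneg_left hint (by positivity)
    _ = ((d:ℝ)^2 * D^2 * T^2 / (3 - 2*α)) * (n:ℝ) ^ (-2:ℝ) * δ ^ (2*α - 3) := by
        rw [hnpow, div_pow]
        ring
    _ ≤ C * (n:ℝ) ^ (-2:ℝ) * δ ^ (2*α - 3) := by
        apply mul_le_mul_of_nonneg_right _ hδp
        apply mul_le_mul_of_nonneg_right _ hnp
        rw [hC]
        linarith
    _ ≤ C * (n:ℝ) ^ (-(2*α)) + C * (n:ℝ) ^ (-2:ℝ) * δ ^ (2*α - 3) := by
        linarith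
end
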